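/- arXiv:1011.5785 — 4 statements merged into one kernel-verified Lean document; each statement's English description precedes it below -/
import Mathlib

section
/- Let p be a prime. Every closed additive subgroup of the ring ℤ_p of p-adic integers is either the trivial subgroup {0} or equal to p^nℤ_p for some natural number n ≥ 0. In particular every nontrivial closed additive subgroup of ℤ_p is open. -/
/-!
A closed additive subgroup `H` of `ℤ_p` is stable under multiplication by `ℕ`, hence, since `ℕ` is
dense in `ℤ_p` and `z ↦ z * a` is continuous, under multiplication by all of `ℤ_p`: it is an ideal.
The nonzero ideals of the discrete valuation ring `ℤ_p` are the `p^n ℤ_p`, which are closed balls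
around `0` and therefore open in the ultrametric topology.
-/

/-- The additive subgroup `p^n ℤ_p = {p^n • x : x ∈ ℤ_p}` of the `p`-adic integers. -/
noncomputable def pPowSubgroup (p : ℕ) [Fact p.Prime] (n : ℕ) : AddSubgroup ℤ_[p] :=
  (AddMonoidHom.mulLeft ((p : ℤ_[p]) ^ n)).range

namespace AddSubgroup

variable {R : Type*} [Ring R] [TopologicalSpace R] [ContinuousMul R]

theorem mul_mem_of_isClosed_of_denseRange_natCast (hdense : DenseRange (Nat.cast : ℕ → R))
    {H : AddSubgroup R} (hH : IsClosed (H : Set R)) {a : R} (ha : a ∈ H) (z : R) :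
    z * a ∈ H := by
  have hclosed : IsClosed {z : R | z * a ∈ H} := hH.preimage (continuous_mul_const a)
  have hnat : Set.range (Nat.cast : ℕ → R) ⊆ {z : R | z * a ∈ H} := by
    rintro _ ⟨m, rfl⟩
    show (m : R) * a ∈ H
    exact nsmul_eq_mul m a ▸ H.nsmul_mem ha m
  exact hclosed.closure_subset_iff.mpr hnat (hdense z)

def toIdealOfIsClosed (hdense : DenseRange (Nat.cast : ℕ → R)) (H : AddSubgroup R)
    (hH : IsClosed (H : Set R)) : Ideal R :=
  { H with smul_mem' := fun z _ ha => mul_mem_of_isClosed_of_denseRange_natCast hdense hH ha z }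

@[simp]
theorem toAddSubgroup_toIdealOfIsClosed (hdense : DenseRange (Nat.cast : ℕ → R))
    (H : AddSubgroup R) (hH : IsClosed (H : Set R)) :
    (H.toIdealOfIsClosed hdense hH).toAddSubgroup = H :=
  rfl

end AddSubgroup

section pPowSubgroup

variable (p : ℕ) [Fact p.Prime] (n : ℕ)

theorem pPowSubgroup_eq_toAddSubgroup_span :
    pPowSubgroup p n = (Ideal.span {(p : ℤ_[p]) ^ n}).toAddSubgroup := by
  ext y
  simp only [pPowSubgroup, AddMonoidHom.mem_range, AddMonoidHom.coe_mulLeft,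
    Submodule.mem_toAddSubgroup, Ideal.mem_span_singleton, dvd_def, eq_comm]

theorem coe_pPowSubgroup_eq_closedBall :
    (pPowSubgroup p n : Set ℤ_[p]) = Metric.closedBall 0 ((p : ℝ) ^ (-n : ℤ)) := by
  ext y
  rw [pPowSubgroup_eq_toAddSubgroup_span, SetLike.mem_coe, Submodule.mem_toAddSubgroup,
    ← PadicInt.norm_le_pow_iff_mem_span_pow, mem_closedBall_zero_iff]

theorem isOpen_pPowSubgroup : IsOpen (pPowSubgroup p n : Set ℤ_[p]) := by
  rw [coe_pPowSubgroup_eq_closedBall]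
  exact IsUltrametricDist.isOpen_closedBall 0
    (zpow_ne_zero _ (Nat.cast_ne_zero.mpr (Fact.out : p.Prime).ne_zero))

end pPowSubgroup

/-- Every closed additive subgroup of `ℤ_p` is trivial or of the form `p^n ℤ_p`;
in particular every nontrivial closed additive subgroup is open. -/
theorem closed_addSubgroup_classification (p : ℕ) [Fact p.Prime]
    (H : AddSubgroup ℤ_[p]) (hH : IsClosed (H : Set ℤ_[p])) :
    (H = ⊥ ∨ ∃ n : ℕ, H = pPowSubgroup p n) ∧ (H ≠ ⊥ → IsOpen (H : Set ℤ_[p])) := by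
  rcases eq_or_ne H ⊥ with rfl | hH0
  · exact ⟨Or.inl rfl, fun h => (h rfl).elim⟩
  set I := H.toIdealOfIsClosed PadicInt.denseRange_natCast hH with hI
  have hI0 : I ≠ ⊥ := fun h => hH0 <| by
    rw [← H.toAddSubgroup_toIdealOfIsClosed PadicInt.denseRange_natCast hH, ← hI, h,
      Submodule.bot_toAddSubgroup]
  obtain ⟨n, hn⟩ := PadicInt.ideal_eq_span_pow_p hI0
  have hHn : H = pPowSubgroup p n := by
    rw [pPowSubgroup_eq_toAddSubgroup_span, ← hn]
    rfl
  exact ⟨Or.inr ⟨n, hHn⟩, fun _ => hHn ▸ isOpen_pPowSubgroup p n⟩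
end

section
/- Let R be a commutative ring, M an R-module, and (e_k)_{k∈ℕ} a family of idempotents of R with e_i · e_j = 0 whenever i ≠ j. Let J ⊆ M be the submodule generated by ⋃_k e_k • M. Then the map φ : M → (M/J) × ∏_{k∈ℕ} (e_k • M) given by φ(m) = (m + J, (e_k • m)_k) is injective, and its image is exactly the set of pairs (x + J, (a_k)_k) such that a_k = e_k • x for all but finitely many k (this condition is independent of the chosen representative x, since e_k • y = 0 for all but finitely many k whenever y ∈ J). Hence M is the pullback of M/J and ∏_k e_k • M over (∏_k e_k • M)/(⨁_k e_k • M). -/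
/-! Write `Mₖ = e k • M`. An element of `J = ⨆ k, Mₖ` is a finite sum `∑ mₖ` with `mₖ ∈ Mₖ`, and
orthogonality gives `e k • ∑ mⱼ = mₖ`; hence an element of `J` killed by every `e k` vanishes,
which is injectivity. Conversely, if `aₖ = e k • x` outside a finite set `S`, then
`m = x + ∑_{k ∈ S} (aₖ - e k • x)` lies in `x + J` and satisfies `e k • m = aₖ` for all `k`. -/

open Pointwise

namespace Submodule

variable {R M ι : Type*} [CommRing R] [AddCommGroup M] [Module R M]

theorem smul_eq_self_of_mem_smul_top {e : R} (he : IsIdempotentElem e) {a : M}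
    (ha : a ∈ e • (⊤ : Submodule R M)) : e • a = a := by
  obtain ⟨x, -, rfl⟩ := (mem_smul_pointwise_iff_exists _ _ _).mp ha
  rw [smul_smul, he.eq]

theorem smul_eq_zero_of_mem_smul_top {e f : R} (hef : e * f = 0) {a : M}
    (ha : a ∈ f • (⊤ : Submodule R M)) : e • a = 0 := by
  obtain ⟨x, -, rfl⟩ := (mem_smul_pointwise_iff_exists _ _ _).mp ha
  rw [smul_smul, hef, zero_smul]

variable {e : ι → R}

theorem smul_sum_of_mem_smul_top [DecidableEq ι] (hidem : ∀ k, IsIdempotentElem (e k))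
    (horth : Pairwise fun i j => e i * e j = 0) {s : Finset ι} {b : ι → M}
    (hb : ∀ k ∈ s, b k ∈ e k • (⊤ : Submodule R M)) (j : ι) :
    e j • ∑ k ∈ s, b k = if j ∈ s then b j else 0 := by
  have hterm : ∀ k ∈ s, e j • b k = if j = k then b k else 0 := fun k hk => by
    split_ifs with hjk
    · exact hjk ▸ smul_eq_self_of_mem_smul_top (hidem j) (hjk ▸ hb k hk)
    · exact smul_eq_zero_of_mem_smul_top (horth hjk) (hb k hk)
  rw [Finset.smul_sum, Finset.sum_congr rfl hterm, Finset.sum_ite_eq]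

theorem eq_zero_of_mem_iSup_smul_top (hidem : ∀ k, IsIdempotentElem (e k))
    (horth : Pairwise fun i j => e i * e j = 0) {d : M} (hd : d ∈ ⨆ k, e k • (⊤ : Submodule R M))
    (h : ∀ k, e k • d = 0) : d = 0 := by
  classical
  obtain ⟨s, hs⟩ := mem_iSup_iff_exists_finset.mp hd
  obtain ⟨b, rfl⟩ := (mem_iSup_finset_iff_exists_sum _ _).mp hs
  refine Finset.sum_eq_zero fun k hk => ?_
  have := smul_sum_of_mem_smul_top hidem horth (s := s) (fun k _ => (b k).2) k
  rwa [h, if_pos hk, eq_comm] at this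

theorem exists_smul_eq_of_finite_ne (hidem : ∀ k, IsIdempotentElem (e k))
    (horth : Pairwise fun i j => e i * e j = 0) {x : M} {a : ι → M}
    (ha : ∀ k, a k ∈ e k • (⊤ : Submodule R M))
    (hfin : {k | a k ≠ e k • x}.Finite) :
    ∃ m, m - x ∈ ⨆ k, e k • (⊤ : Submodule R M) ∧ ∀ k, e k • m = a k := by
  classical
  have hdiff : ∀ k, a k - e k • x ∈ e k • (⊤ : Submodule R M) := fun k =>
    sub_mem (ha k) (smul_mem_pointwise_smul x (e k) ⊤ trivial)
  refine ⟨x + ∑ k ∈ hfin.toFinset, (a k - e k • x), ?_, fun j => ?_⟩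
  · rw [add_sub_cancel_left]
    exact sum_mem fun k _ => mem_iSup_of_mem k (hdiff k)
  · rw [smul_add, smul_sum_of_mem_smul_top hidem horth (fun k _ => hdiff k)]
    split_ifs with hj
    · abel
    · simpa [eq_comm] using (Set.Finite.mem_toFinset hfin).not.mp hj

end Submodule

/-- Given a countable family of pairwise-orthogonal idempotents `e k` of a commutative
ring `R` and an `R`-module `M`, with `J` the submodule generated by `⋃ k, e k • M`, the
map `m ↦ (m + J, (e k • m)_k)` is injective and its image consists exactly of the pairs
`(x + J, (a k)_k)` with `a k = e k • x` for all but finitely many `k`.  Hence `M` is the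
pullback of `M/J` and `∏ k, e k • M` over `(∏ k, e k • M)/(⨁ k, e k • M)`. -/
theorem module_pullback_of_orthogonal_idempotents
    (R : Type*) [CommRing R] (M : Type*) [AddCommGroup M] [Module R M]
    (e : ℕ → R) (hidem : ∀ k, IsIdempotentElem (e k))
    (horth : ∀ i j : ℕ, i ≠ j → e i * e j = 0) :
    ∀ (J : Submodule R M),
      J = Submodule.span R (⋃ k : ℕ, ((e k • (⊤ : Submodule R M) : Submodule R M) : Set M)) →
    ∀ (φ : M → (M ⧸ J) × ((k : ℕ) → (e k • (⊤ : Submodule R M) : Submodule R M))),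
      (∀ m : M, φ m = (Submodule.Quotient.mk m,
        fun k => ⟨e k • m, Submodule.smul_mem_pointwise_smul m (e k) ⊤ trivial⟩)) →
    Function.Injective φ ∧
      Set.range φ = {y | ∃ x : M, y.1 = Submodule.Quotient.mk x ∧
        {k : ℕ | ((y.2 k : M)) ≠ e k • x}.Finite} := by
  rintro J hJ φ hφ
  rw [← Submodule.iSup_eq_span] at hJ
  subst hJ
  have horth' : Pairwise fun i j => e i * e j = 0 := fun i j => horth i j
  refine ⟨fun m₁ m₂ h => ?_, Set.ext fun y => ⟨?_, ?_⟩⟩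
  · simp only [hφ, Prod.mk.injEq, Submodule.Quotient.eq, funext_iff, Subtype.ext_iff] at h
    refine sub_eq_zero.mp (Submodule.eq_zero_of_mem_iSup_smul_top hidem horth' h.1 fun k => ?_)
    rw [smul_sub, h.2 k, sub_self]
  · rintro ⟨m, rfl⟩
    exact ⟨m, by simp [hφ]⟩
  · rintro ⟨x, hx, hfin⟩
    obtain ⟨m, hmx, hm⟩ :=
      Submodule.exists_smul_eq_of_finite_ne hidem horth' (fun k => (y.2 k).2) hfin
    refine ⟨m, Prod.ext ?_ (funext fun k => Subtype.ext ?_)⟩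
    · rw [hφ, hx, Submodule.Quotient.eq]
      exact hmx
    · simp [hφ, hm]
end

section
/- Let p be a prime and let M and N be ℚ-vector spaces with ℚ-linear ℤ_p-actions making them discrete ℤ_p-modules, and let f : M → N be an equivariant ℚ-linear map. Then f is surjective if and only if for every n ∈ ℕ the restriction of f to fixed points, f : M^{p^nℤ_p} → N^{p^nℤ_p}, is surjective, where M^{p^nℤ_p} = {m ∈ M : ρ_M(g)(m) = m for all g ∈ p^nℤ_p}. -/
open Finset

theorem Function.Periodic.sum_range_comp_add {M : Type*} [AddCommGroup M] {φ : ℕ → M} {c : ℕ}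
    (hφ : Function.Periodic φ c) (m : ℕ) :
    ∑ k ∈ range c, φ (m + k) = ∑ k ∈ range c, φ k := by
  induction m with
  | zero => simp
  | succ m ih =>
    have hshift := (sum_range_succ' (fun k => φ (m + k)) c).symm.trans
      (sum_range_succ (fun k => φ (m + k)) c)
    rw [add_zero, hφ m, add_left_inj] at hshift
    simpa only [← add_assoc, add_right_comm m 1] using hshift.trans ih

section Averaging

variable {A M : Type*} [AddCommGroup A] [AddCommGroup M] [Module ℚ M]

def IsFixedBy (ρ : Multiplicative A →* (M ≃ₗ[ℚ] M)) (H : AddSubgroup A) (x : M) : Prop :=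
  ∀ g ∈ H, ρ (Multiplicative.ofAdd g) x = x

def average (ρ : Multiplicative A →* (M ≃ₗ[ℚ] M)) (a : A) (c : ℕ) (x : M) : M :=
  (c : ℚ)⁻¹ • ∑ k ∈ range c, ρ (Multiplicative.ofAdd (k • a)) x

theorem apply_ofAdd_add (ρ : Multiplicative A →* (M ≃ₗ[ℚ] M)) (a b : A) (x : M) :
    ρ (Multiplicative.ofAdd (a + b)) x =
      ρ (Multiplicative.ofAdd a) (ρ (Multiplicative.ofAdd b) x) := by
  rw [ofAdd_add, map_mul, LinearEquiv.mul_apply]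

theorem IsFixedBy.apply_eq_of_sub_mem {ρ : Multiplicative A →* (M ≃ₗ[ℚ] M)} {L : AddSubgroup A}
    {x : M} (hx : IsFixedBy ρ L x) {a b : A} (hab : a - b ∈ L) :
    ρ (Multiplicative.ofAdd a) x = ρ (Multiplicative.ofAdd b) x := by
  rw [← add_sub_cancel b a, apply_ofAdd_add, hx _ hab]

theorem IsFixedBy.average_eq {ρ : Multiplicative A →* (M ≃ₗ[ℚ] M)} {H : AddSubgroup A} {x : M}
    (hx : IsFixedBy ρ H x) {a : A} (ha : a ∈ H) {c : ℕ} (hc : c ≠ 0) : average ρ a c x = x := by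
  have hterm : ∀ k ∈ range c, ρ (Multiplicative.ofAdd (k • a)) x = x :=
    fun k _ => hx _ (H.nsmul_mem ha k)
  rw [average, sum_congr rfl hterm, sum_const, card_range, ← Nat.cast_smul_eq_nsmul ℚ, smul_smul,
    inv_mul_cancel₀ (Nat.cast_ne_zero.mpr hc), one_smul]

theorem map_average {N : Type*} [AddCommGroup N] [Module ℚ N]
    {ρM : Multiplicative A →* (M ≃ₗ[ℚ] M)} {ρN : Multiplicative A →* (N ≃ₗ[ℚ] N)}
    {f : M →ₗ[ℚ] N}
    (hf : ∀ g m, f (ρM (Multiplicative.ofAdd g) m) = ρN (Multiplicative.ofAdd g) (f m))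
    (a : A) (c : ℕ) (x : M) : f (average ρM a c x) = average ρN a c (f x) := by
  simp only [average, map_smul, map_sum, hf]

theorem IsFixedBy.isFixedBy_average {ρ : Multiplicative A →* (M ≃ₗ[ℚ] M)} {L H : AddSubgroup A}
    {x : M} (hx : IsFixedBy ρ L x) {a : A} {c : ℕ} (hca : c • a ∈ L)
    (hH : ∀ h ∈ H, ∃ m : ℕ, h - m • a ∈ L) : IsFixedBy ρ H (average ρ a c x) := by
  set φ : ℕ → M := fun k => ρ (Multiplicative.ofAdd (k • a)) x
  have hφ : Function.Periodic φ c := fun k =>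
    hx.apply_eq_of_sub_mem (by rwa [add_nsmul, add_sub_cancel_left])
  intro h hh
  obtain ⟨m, hm⟩ := hH h hh
  have htranslate : ∀ k : ℕ, ρ (Multiplicative.ofAdd h) (φ k) = φ (m + k) := fun k => by
    rw [← apply_ofAdd_add]
    exact hx.apply_eq_of_sub_mem (by rwa [add_nsmul, add_sub_add_right_eq_sub])
  simp only [average, map_smul, map_sum]
  rw [sum_congr rfl fun k _ => htranslate k, hφ.sum_range_comp_add]

end Averaging

section PAdic

variable {p : ℕ} [Fact p.Prime]

theorem mem_pPowSubgroup {n : ℕ} {g : ℤ_[p]} :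
    g ∈ pPowSubgroup p n ↔ ∃ x, (p : ℤ_[p]) ^ n * x = g := by
  simp [pPowSubgroup, AddMonoidHom.mem_range]

theorem pow_nsmul_mem_pPowSubgroup (m n : ℕ) :
    p ^ m • (p : ℤ_[p]) ^ n ∈ pPowSubgroup p m :=
  mem_pPowSubgroup.mpr ⟨(p : ℤ_[p]) ^ n, by rw [nsmul_eq_mul, Nat.cast_pow]⟩

/-- Density of `ℕ` in `ℤ_p`. -/
theorem exists_sub_nsmul_mem_pPowSubgroup (m : ℕ) {n : ℕ} {h : ℤ_[p]}
    (hh : h ∈ pPowSubgroup p n) : ∃ k : ℕ, h - k • (p : ℤ_[p]) ^ n ∈ pPowSubgroup p m := by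
  obtain ⟨u, rfl⟩ := mem_pPowSubgroup.mp hh
  obtain ⟨z, hz⟩ := Ideal.mem_span_singleton'.mp (PadicInt.appr_spec m u)
  refine ⟨PadicInt.appr u m, mem_pPowSubgroup.mpr ⟨(p : ℤ_[p]) ^ n * z, ?_⟩⟩
  rw [nsmul_eq_mul, mul_comm _ ((p : ℤ_[p]) ^ n), ← mul_sub, ← hz]
  ring

end PAdic

/-- An equivariant `ℚ`-linear map `f : M → N` of discrete rational `ℤ_p`-modules is
surjective if and only if for every `n` it is surjective on `p^n ℤ_p`-fixed points. -/
theorem surjective_iff_surjective_on_fixed_points (p : ℕ) [Fact p.Prime]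
    (M N : Type*) [AddCommGroup M] [Module ℚ M] [AddCommGroup N] [Module ℚ N]
    (ρM : Multiplicative ℤ_[p] →* (M ≃ₗ[ℚ] M))
    (ρN : Multiplicative ℤ_[p] →* (N ≃ₗ[ℚ] N))
    (hM : ∀ m : M, ∃ n : ℕ, ∀ g ∈ pPowSubgroup p n, ρM (Multiplicative.ofAdd g) m = m)
    (hN : ∀ x : N, ∃ n : ℕ, ∀ g ∈ pPowSubgroup p n, ρN (Multiplicative.ofAdd g) x = x)
    (f : M →ₗ[ℚ] N)
    (hf : ∀ (g : ℤ_[p]) (m : M),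
      f (ρM (Multiplicative.ofAdd g) m) = ρN (Multiplicative.ofAdd g) (f m)) :
    Function.Surjective f ↔
      ∀ n : ℕ, ∀ y : N, (∀ g ∈ pPowSubgroup p n, ρN (Multiplicative.ofAdd g) y = y) →
        ∃ x : M, (∀ g ∈ pPowSubgroup p n, ρM (Multiplicative.ofAdd g) x = x) ∧
          f x = y := by
  constructor
  · intro hsurj n y hy
    obtain ⟨x, rfl⟩ := hsurj y
    obtain ⟨m, hx⟩ := hM x
    have hpm : p ^ m ≠ 0 := pow_ne_zero m (Fact.out : p.Prime).ne_zero
    refine ⟨average ρM ((p : ℤ_[p]) ^ n) (p ^ m) x, ?_, ?_⟩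
    · exact IsFixedBy.isFixedBy_average hx (pow_nsmul_mem_pPowSubgroup m n)
        fun h hh => exists_sub_nsmul_mem_pPowSubgroup m hh
    · rw [map_average hf]
      exact IsFixedBy.average_eq hy (mem_pPowSubgroup.mpr ⟨1, mul_one _⟩) hpm
  · intro h y
    obtain ⟨n, hn⟩ := hN y
    obtain ⟨x, -, hx⟩ := h n y hn
    exact ⟨x, hx⟩
end

section
/- Let p be a prime and m, n natural numbers. Give the group algebra ℚ[ZMod (p^m)] the action of the additive group ℤ_p in which g ∈ ℤ_p acts by left multiplication by the image of g under the projection ℤ_p → ZMod (p^m), and similarly for ℚ[ZMod (p^n)]. Then the ℚ-vector space of ℤ_p-equivariant ℚ-linear maps from ℚ[ZMod (p^m)] to ℚ[ZMod (p^n)] is isomorphic, as a ℚ-vector space, to ℚ[ZMod (p^{min(m,n)})]; in particular it has dimension p^{min(m,n)}. -/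
/-!
An equivariant map `f : ℚ[ℤ/p^m] → ℚ[ℤ/p^n]` is determined by `v = f 1`, because `ℤ_p → ℤ/p^m`
is surjective, and `v` can be any element fixed by the image of `ker (ℤ_p → ℤ/p^m) = p^m ℤ_p` in
`ℤ/p^n`. That image is the kernel of the reduction `ℤ/p^n → ℤ/p^(min m n)`, and the elements of
`ℚ[ℤ/p^n]` fixed by it are those whose coefficients are constant on its cosets, i.e. pulled back
from `ℚ[ℤ/p^(min m n)]`.
-/

open Function

namespace MonoidAlgebra

variable (k : Type*) {G H₁ H₂ H₃ : Type*} [CommSemiring k]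

section Monoid

variable [Monoid G] [Monoid H₁] [Monoid H₂] (φ₁ : G →* H₁) (φ₂ : G →* H₂)

def equivariantMaps : Submodule k (MonoidAlgebra k H₁ →ₗ[k] MonoidAlgebra k H₂) where
  carrier := {f | ∀ g x, f (of k H₁ (φ₁ g) * x) = of k H₂ (φ₂ g) * f x}
  add_mem' hf hf' g x := by simp only [LinearMap.add_apply, hf g x, hf' g x, mul_add]
  zero_mem' g x := by simp
  smul_mem' c f hf g x := by simp only [LinearMap.smul_apply, hf g x, mul_smul_comm]

/-- When `G` and `H₂` are groups, these are the elements of `k[H₂]` fixed by left multiplication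
by `φ₂ (ker φ₁)`. -/
def kerInvariants : Submodule k (MonoidAlgebra k H₂) where
  carrier := {v | ∀ g g', φ₁ g = φ₁ g' → of k H₂ (φ₂ g) * v = of k H₂ (φ₂ g') * v}
  add_mem' hv hv' g g' h := by simp only [mul_add, hv g g' h, hv' g g' h]
  zero_mem' g g' h := by simp
  smul_mem' c v hv g g' h := by simp only [mul_smul_comm, hv g g' h]

variable {k φ₁ φ₂}

theorem apply_of_of_mem_equivariantMaps {f : MonoidAlgebra k H₁ →ₗ[k] MonoidAlgebra k H₂}
    (hf : f ∈ equivariantMaps k φ₁ φ₂) (g : G) :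
    f (of k H₁ (φ₁ g)) = of k H₂ (φ₂ g) * f 1 := by
  simpa using hf g 1

theorem apply_one_mem_kerInvariants {f : MonoidAlgebra k H₁ →ₗ[k] MonoidAlgebra k H₂}
    (hf : f ∈ equivariantMaps k φ₁ φ₂) : f 1 ∈ kerInvariants k φ₁ φ₂ := fun g g' h => by
  rw [← apply_of_of_mem_equivariantMaps hf, h, apply_of_of_mem_equivariantMaps hf]

theorem eq_of_mem_equivariantMaps (hφ₁ : Surjective φ₁)
    {f f' : MonoidAlgebra k H₁ →ₗ[k] MonoidAlgebra k H₂} (hf : f ∈ equivariantMaps k φ₁ φ₂)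
    (hf' : f' ∈ equivariantMaps k φ₁ φ₂) (h : f 1 = f' 1) : f = f' := by
  refine (basis H₁ k).ext fun a => ?_
  obtain ⟨g, rfl⟩ := hφ₁ a
  rw [basis_apply, ← of_apply, apply_of_of_mem_equivariantMaps hf,
    apply_of_of_mem_equivariantMaps hf', h]

noncomputable def equivariantLift (φ₂ : G →* H₂) (hφ₁ : Surjective φ₁) (v : MonoidAlgebra k H₂) :
    MonoidAlgebra k H₁ →ₗ[k] MonoidAlgebra k H₂ :=
  (basis H₁ k).constr k fun a => of k H₂ (φ₂ (surjInv hφ₁ a)) * v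

theorem equivariantLift_of (hφ₁ : Surjective φ₁) {v : MonoidAlgebra k H₂}
    (hv : v ∈ kerInvariants k φ₁ φ₂) (g : G) :
    equivariantLift φ₂ hφ₁ v (of k H₁ (φ₁ g)) = of k H₂ (φ₂ g) * v := by
  rw [of_apply, ← basis_apply, equivariantLift, Module.Basis.constr_basis]
  exact hv _ _ (surjInv_eq hφ₁ _)

theorem equivariantLift_mem (hφ₁ : Surjective φ₁) {v : MonoidAlgebra k H₂}
    (hv : v ∈ kerInvariants k φ₁ φ₂) : equivariantLift φ₂ hφ₁ v ∈ equivariantMaps k φ₁ φ₂ := by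
  intro g x
  induction x using induction_linear with
  | zero => simp
  | add x y hx hy => rw [mul_add, map_add, hx, hy, map_add, mul_add]
  | single a r =>
    obtain ⟨g', rfl⟩ := hφ₁ a
    rw [← smul_of, mul_smul_comm, map_smul, map_smul, ← map_mul, ← map_mul,
      equivariantLift_of hφ₁ hv, equivariantLift_of hφ₁ hv, map_mul, map_mul, mul_assoc,
      mul_smul_comm]

theorem equivariantLift_apply_one (hφ₁ : Surjective φ₁) {v : MonoidAlgebra k H₂}
    (hv : v ∈ kerInvariants k φ₁ φ₂) : equivariantLift φ₂ hφ₁ v 1 = v := by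
  simpa only [map_one, one_mul] using equivariantLift_of hφ₁ hv 1

noncomputable def equivariantMapsEquivKerInvariants (hφ₁ : Surjective φ₁) :
    equivariantMaps k φ₁ φ₂ ≃ₗ[k] kerInvariants k φ₁ φ₂ :=
  LinearEquiv.ofBijective
    (LinearMap.codRestrict _ ((LinearMap.applyₗ 1).comp (equivariantMaps k φ₁ φ₂).subtype)
      fun f => apply_one_mem_kerInvariants f.2)
    ⟨fun f f' h => Subtype.ext <| eq_of_mem_equivariantMaps hφ₁ f.2 f'.2 congr(($h).1),
      fun v => ⟨⟨_, equivariantLift_mem hφ₁ v.2⟩,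
        Subtype.ext <| equivariantLift_apply_one hφ₁ v.2⟩⟩

end Monoid

section FiberConstant

def fiberConstant (ψ : H₂ → H₃) : Submodule k (MonoidAlgebra k H₂) where
  carrier := {v | ∀ a b, ψ a = ψ b → v.coeff a = v.coeff b}
  add_mem' hv hv' a b h := by simp only [coeff_add, Finsupp.add_apply, hv a b h, hv' a b h]
  zero_mem' a b h := rfl
  smul_mem' c v hv a b h := by simp only [coeff_smul, Finsupp.smul_apply, hv a b h]

variable {k} [Finite H₂] [Finite H₃] {ψ : H₂ → H₃}

noncomputable def fiberConstantEquiv (hψ : Surjective ψ) :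
    fiberConstant k ψ ≃ₗ[k] MonoidAlgebra k H₃ where
  toFun v := ofCoeff <| Finsupp.equivFunOnFinite.symm fun c =>
    (v : MonoidAlgebra k H₂).coeff (surjInv hψ c)
  map_add' _ _ := ext <| Finsupp.ext fun _ => rfl
  map_smul' _ _ := ext <| Finsupp.ext fun _ => rfl
  invFun w := ⟨ofCoeff <| Finsupp.equivFunOnFinite.symm fun a => w.coeff (ψ a),
    fun a b h => by simp [h]⟩
  left_inv v := Subtype.ext <| ext <| Finsupp.ext fun a => v.2 _ _ (surjInv_eq hψ _)
  right_inv w := ext <| Finsupp.ext fun c => by simp [surjInv_eq hψ c]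

end FiberConstant

section Group

variable [Group G] [Group H₁] [Group H₂] [Group H₃] {φ₁ : G →* H₁} {φ₂ : G →* H₂}

theorem kerInvariants_eq_fiberConstant {ψ : H₂ →* H₃} (hker : ψ.ker = φ₁.ker.map φ₂) :
    kerInvariants k φ₁ φ₂ = fiberConstant k ψ := by
  ext v
  constructor
  · intro hv a b hab
    obtain ⟨g, hg, hga⟩ : b * a⁻¹ ∈ φ₁.ker.map φ₂ := by
      rw [← hker, MonoidHom.mem_ker, map_mul, map_inv, hab, mul_inv_cancel]
    have hfix := congr(($(hv g 1 (by rwa [map_one]))).coeff b)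
    simpa [hga] using hfix
  · intro hv g g' h
    have hψ : ψ (φ₂ g) = ψ (φ₂ g') := by
      have : φ₂ (g⁻¹ * g') ∈ ψ.ker := hker ▸ Subgroup.mem_map_of_mem φ₂ (by simp [h])
      rwa [MonoidHom.mem_ker, map_mul, map_mul, map_inv, map_inv, inv_mul_eq_one] at this
    ext a
    simp only [of_apply, coeff_single_mul_apply, one_mul]
    exact hv _ _ (by simp [hψ])

end Group

end MonoidAlgebra

namespace PadicInt

variable {p : ℕ} [Fact p.Prime]

theorem exists_toZModPow_eq_zero_and_eq_iff {m n : ℕ} (x : ZMod (p ^ n)) :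
    (∃ g : ℤ_[p], toZModPow m g = 0 ∧ toZModPow n g = x) ↔
      (x.cast : ZMod (p ^ min m n)) = 0 := by
  constructor
  · rintro ⟨g, hg, rfl⟩
    rw [cast_toZModPow _ _ (min_le_right m n), ← cast_toZModPow _ _ (min_le_left m n), hg,
      ZMod.cast_zero]
  · intro hx
    obtain h | h := le_total m n
    · rw [min_eq_left h] at hx
      refine ⟨x.val, ?_, ?_⟩
      · rw [map_natCast, ZMod.natCast_val, hx]
      · rw [map_natCast, ZMod.natCast_zmod_val]
    · rw [min_eq_right h, ZMod.cast_id] at hx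
      exact ⟨0, map_zero _, by rw [map_zero, hx]⟩

end PadicInt

open MonoidAlgebra PadicInt

/-- Let `ℤ_p` act on the group algebra `ℚ[ZMod (p^k)]` by left multiplication through
the projection `ℤ_p → ZMod (p^k)`.  The `ℚ`-vector space of `ℤ_p`-equivariant
`ℚ`-linear maps `ℚ[ZMod (p^m)] → ℚ[ZMod (p^n)]` is isomorphic to
`ℚ[ZMod (p^(min m n))]`; in particular it has dimension `p^(min m n)`. -/
theorem equivariant_homs_iso (p m n : ℕ) [Fact p.Prime] :
    ∃ E : Submodule ℚ ((MonoidAlgebra ℚ (Multiplicative (ZMod (p ^ m)))) →ₗ[ℚ]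
            (MonoidAlgebra ℚ (Multiplicative (ZMod (p ^ n))))),
      (E : Set ((MonoidAlgebra ℚ (Multiplicative (ZMod (p ^ m)))) →ₗ[ℚ]
            (MonoidAlgebra ℚ (Multiplicative (ZMod (p ^ n)))))) =
        {f : (MonoidAlgebra ℚ (Multiplicative (ZMod (p ^ m)))) →ₗ[ℚ]
            (MonoidAlgebra ℚ (Multiplicative (ZMod (p ^ n)))) |
          ∀ (g : ℤ_[p]) (x : MonoidAlgebra ℚ (Multiplicative (ZMod (p ^ m)))),
          f ((MonoidAlgebra.of ℚ (Multiplicative (ZMod (p ^ m)))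
                (Multiplicative.ofAdd (PadicInt.toZModPow m g))) * x)
            = (MonoidAlgebra.of ℚ (Multiplicative (ZMod (p ^ n)))
                (Multiplicative.ofAdd (PadicInt.toZModPow n g))) * f x} ∧
      Nonempty (E ≃ₗ[ℚ] MonoidAlgebra ℚ (Multiplicative (ZMod (p ^ (min m n))))) ∧
      Module.finrank ℚ E = p ^ (min m n) := by
  let φ (j : ℕ) : Multiplicative ℤ_[p] →* Multiplicative (ZMod (p ^ j)) :=
    AddMonoidHom.toMultiplicative (toZModPow j : ℤ_[p] →+* ZMod (p ^ j)).toAddMonoidHom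
  let ψ : Multiplicative (ZMod (p ^ n)) →* Multiplicative (ZMod (p ^ min m n)) :=
    AddMonoidHom.toMultiplicative
      (ZMod.castHom (pow_dvd_pow p (min_le_right m n)) _ : _ →+* ZMod (p ^ min m n)).toAddMonoidHom
  have hker : ψ.ker = (φ m).ker.map (φ n) := by
    ext x
    simpa [φ, ψ, ← toAdd_eq_zero] using (exists_toZModPow_eq_zero_and_eq_iff x.toAdd).symm
  have hφ : Surjective (φ m) := ZMod.ringHom_surjective (toZModPow m)
  have hψ : Surjective ψ := ZMod.castHom_surjective (pow_dvd_pow p (min_le_right m n))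
  let e := (equivariantMapsEquivKerInvariants (φ₂ := φ n) hφ).trans
    ((LinearEquiv.ofEq _ _ (kerInvariants_eq_fiberConstant ℚ hker)).trans
      (fiberConstantEquiv hψ))
  refine ⟨equivariantMaps ℚ (φ m) (φ n), rfl, ⟨e⟩, ?_⟩
  rw [e.finrank_eq, Module.finrank_eq_card_basis (basis _ ℚ), Fintype.card_multiplicative,
    ZMod.card]
end
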